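/- Let C ⊆ ℝ^d be a properly convex open cone, let Γ ≤ GL(d,ℝ) be a subgroup preserving C, and let M be a real d×d matrix such that for every nonzero x ∈ ℝ^d the projective orbit of x under t ↦ exp(tM) is a proper subset of a projective line. If Γ approaches the flow t ↦ exp(tM) at infinity, then the flow preserves C, i.e. exp(tM)·C = C for every t ∈ ℝ. -/

import Mathlib

/-!
For `z ∈ C`, the orbit hypothesis forces `M` to act on `span {z, M z}` in one of three real
ways: `z` is an eigenvector, `z = p + q` with eigenvalues `l < m`, or `M z = l z + w` with `w` an
eigenvector (complex eigenvalues would make the projective orbit a whole line).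

Since `c γ exp(tM)⁻¹ → 1` with `γ` preserving `C`, every limit of positively rescaled points
`exp(tM) z` along the approximating times lies in `σ • closure C`, where `σ` is the sign of `c`
along a subsequence. The sign `σ = -1` is impossible as soon as the orbit of `z` in the opposite
time direction stays in `C`: the limit statement applied to that orbit puts `-z` in `closure C`.
Forward limits give `q` and backward limits `p` in `closure C`, so `exp(τM) z`, a positive
combination of `p` and `q`, lies in `C`; in the Jordan case they give both `w` and `-w`,
contradicting properness.
-/

attribute [local instance] Matrix.linftyOpNormedAddCommGroup

/-- A properly convex open cone in `ℝ^d`. -/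
def IsProperlyConvexOpenCone (d : ℕ) (C : Set (Fin d → ℝ)) : Prop :=
  C.Nonempty ∧ IsOpen C ∧ Convex ℝ C ∧
    (∀ x ∈ C, ∀ c : ℝ, 0 < c → c • x ∈ C) ∧
    closure C ∩ (-(closure C)) = {0}

/-- The projective orbit of a nonzero vector `x` under the one-parameter group
`t ↦ exp (t M)` is a proper subset of a projective line. -/
def ProjOrbitProperSubsetOfLine (d : ℕ) (M : Matrix (Fin d) (Fin d) ℝ)
    (x : Fin d → ℝ) : Prop :=
  ∃ V : Submodule ℝ (Fin d → ℝ), Module.finrank ℝ V = 2 ∧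
    (∀ t : ℝ, (NormedSpace.exp (t • M)).mulVec x ∈ V) ∧
    ∃ y ∈ V, y ≠ 0 ∧ ∀ t c : ℝ, (NormedSpace.exp (t • M)).mulVec x ≠ c • y

/-- `Γ` approaches the flow `t ↦ exp(tM)` at infinity: for every `ε > 0` and every
`s ∈ ℝ` there are group elements projectively `ε`-close to `exp(tM)` for some `t > s`,
and to `exp(t'M)` for some `t' < -s`. -/
noncomputable def ApproachesFlowAtInfinity (d : ℕ)
    (Γ : Subgroup (Matrix.GeneralLinearGroup (Fin d) ℝ))
    (M : Matrix (Fin d) (Fin d) ℝ) : Prop :=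
  ∀ ε : ℝ, 0 < ε → ∀ s : ℝ,
    (∃ γ ∈ Γ, ∃ t : ℝ, t > s ∧ ∃ c : ℝ, c ≠ 0 ∧
      ‖c • ((γ : Matrix (Fin d) (Fin d) ℝ) * (NormedSpace.exp (t • M))⁻¹) - 1‖ < ε) ∧
    (∃ γ' ∈ Γ, ∃ t' : ℝ, t' < -s ∧ ∃ c' : ℝ, c' ≠ 0 ∧
      ‖c' • ((γ' : Matrix (Fin d) (Fin d) ℝ) * (NormedSpace.exp (t' • M))⁻¹) - 1‖ < ε)

open Matrix NormedSpace Filter Topology Set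

section ConvexCone

variable {E : Type*} [AddCommGroup E] [Module ℝ E] [TopologicalSpace E] [IsTopologicalAddGroup E]
  [ContinuousSMul ℝ E] {C : Set E}

theorem smul_add_smul_mem_of_mem_closure
    (hopen : IsOpen C) (hconv : Convex ℝ C) (hcone : ∀ x ∈ C, ∀ c : ℝ, 0 < c → c • x ∈ C)
    {a b : ℝ} (ha : 0 < a) (hb : 0 ≤ b) {x y : E} (hx : x ∈ C) (hy : y ∈ closure C) :
    a • x + b • y ∈ C := by
  have hab : 0 < a + b := add_pos_of_pos_of_nonneg ha hb
  have hcombo := hconv.combo_interior_closure_mem_interior (hopen.interior_eq.symm ▸ hx) hy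
    (div_pos ha hab) (div_nonneg hb hab.le) (by field_simp)
  rw [hopen.interior_eq] at hcombo
  convert hcone _ hcombo _ hab using 1
  rw [smul_add, smul_smul, smul_smul, mul_div_cancel₀ _ hab.ne', mul_div_cancel₀ _ hab.ne']

theorem smul_add_smul_mem_of_add_mem
    (hopen : IsOpen C) (hconv : Convex ℝ C) (hcone : ∀ x ∈ C, ∀ c : ℝ, 0 < c → c • x ∈ C)
    {a b : ℝ} (ha : 0 < a) (hb : 0 < b) {x y : E} (hxy : x + y ∈ C) (hx : x ∈ closure C)
    (hy : y ∈ closure C) : a • x + b • y ∈ C := by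
  rcases le_total a b with hab | hab
  · have hcomb : a • x + b • y = a • (x + y) + (b - a) • y := by module
    rw [hcomb]
    exact smul_add_smul_mem_of_mem_closure hopen hconv hcone ha (sub_nonneg.2 hab) hxy hy
  · have hcomb : a • x + b • y = b • (x + y) + (a - b) • x := by module
    rw [hcomb]
    exact smul_add_smul_mem_of_mem_closure hopen hconv hcone hb (sub_nonneg.2 hab) hxy hx

end ConvexCone

theorem HasDerivAt.mem_of_forall_mem {E : Type*} [NormedAddCommGroup E] [NormedSpace ℝ E]
    {V : Submodule ℝ E} (hV : IsClosed (V : Set E)) {f : ℝ → E} {f' : E} {t : ℝ}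
    (hf : HasDerivAt f f' t) (hmem : ∀ s, f s ∈ V) : f' ∈ V :=
  hV.mem_of_tendsto (hasDerivAt_iff_tendsto_slope.mp hf)
    (Eventually.of_forall fun s => V.smul_mem _ (V.sub_mem (hmem s) (hmem t)))

section Flow

attribute [local instance] Matrix.linftyOpNormedRing Matrix.linftyOpNormedAlgebra

variable {d : ℕ} {M : Matrix (Fin d) (Fin d) ℝ}

theorem exp_smul_mulVec_exp_neg_smul_mulVec (M : Matrix (Fin d) (Fin d) ℝ) (t : ℝ)
    (v : Fin d → ℝ) : exp (t • M) *ᵥ (exp ((-t) • M) *ᵥ v) = v := by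
  rw [mulVec_mulVec, ← Matrix.exp_add_of_commute _ _ ((Commute.refl M).smul_left t |>.smul_right _),
    ← add_smul, add_neg_cancel, zero_smul, exp_zero, one_mulVec]

theorem exp_smul_mulVec_mulVec_comm (M : Matrix (Fin d) (Fin d) ℝ) (t : ℝ) (z : Fin d → ℝ) :
    exp (t • M) *ᵥ (M *ᵥ z) = M *ᵥ (exp (t • M) *ᵥ z) := by
  rw [mulVec_mulVec, mulVec_mulVec, ((Commute.refl M).smul_right t).exp_right.eq]

theorem hasDerivAt_exp_smul_mulVec (M : Matrix (Fin d) (Fin d) ℝ) (z : Fin d → ℝ) (t : ℝ) :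
    HasDerivAt (fun s : ℝ => exp (s • M) *ᵥ z) (exp (t • M) *ᵥ (M *ᵥ z)) t := by
  rw [mulVec_mulVec]
  exact ((mulVecBilin ℝ ℝ).flip z).toContinuousLinearMap.hasFDerivAt.comp_hasDerivAt t
    (hasDerivAt_exp_smul_const (𝕂 := ℝ) M t)

theorem exp_smul_mulVec_eq_of_hasDerivAt {g : ℝ → Fin d → ℝ}
    (hg : ∀ t, HasDerivAt g (M *ᵥ g t) t) (t : ℝ) : exp (t • M) *ᵥ g 0 = g t := by
  have hlip : LipschitzWith _ (M *ᵥ ·) := M.mulVecLin.toContinuousLinearMap.lipschitz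
  refine congrFun (ODE_solution_unique_univ (f := fun s => exp (s • M) *ᵥ g 0)
    (v := fun _ => (M *ᵥ ·)) (s := fun _ => univ)
    (t₀ := 0) (fun _ => hlip.lipschitzOnWith) (fun s => ⟨?_, trivial⟩)
    (fun s => ⟨hg s, trivial⟩) (by simp)) t
  rw [← exp_smul_mulVec_mulVec_comm]
  exact hasDerivAt_exp_smul_mulVec M (g 0) s

theorem exp_smul_mulVec_of_jordan {l : ℝ} {z w : Fin d → ℝ} (hz : M *ᵥ z = l • z + w)
    (hw : M *ᵥ w = l • w) (t : ℝ) :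
    exp (t • M) *ᵥ z = Real.exp (l * t) • z + (t * Real.exp (l * t)) • w := by
  have hsol : ∀ s : ℝ, HasDerivAt (fun s => Real.exp (l * s) • z + (s * Real.exp (l * s)) • w)
      (M *ᵥ (Real.exp (l * s) • z + (s * Real.exp (l * s)) • w)) s := by
    intro s
    have hexp : HasDerivAt (fun s => Real.exp (l * s)) (Real.exp (l * s) * l) s := by
      simpa using ((hasDerivAt_id s).const_mul l).exp
    refine ((hexp.smul_const z).add (((hasDerivAt_id' s).mul hexp).smul_const w)).congr_deriv ?_
    rw [mulVec_add, mulVec_smul, mulVec_smul, hz, hw]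
    match_scalars <;> ring
  simpa using exp_smul_mulVec_eq_of_hasDerivAt hsol t

theorem exp_smul_mulVec_of_eigen {l : ℝ} {z : Fin d → ℝ} (hz : M *ᵥ z = l • z) (t : ℝ) :
    exp (t • M) *ᵥ z = Real.exp (l * t) • z := by
  simpa using exp_smul_mulVec_of_jordan (w := 0) (by simpa using hz) (by simp) t

theorem exp_smul_mulVec_of_rotation {a ω : ℝ} (hω : ω ≠ 0) {z w : Fin d → ℝ}
    (hz : M *ᵥ z = a • z + w) (hw : M *ᵥ w = (-ω ^ 2) • z + a • w) (t : ℝ) :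
    exp (t • M) *ᵥ z = (Real.exp (a * t) * Real.cos (ω * t)) • z
      + (Real.exp (a * t) * Real.sin (ω * t) / ω) • w := by
  have hsol : ∀ s : ℝ, HasDerivAt (fun s => (Real.exp (a * s) * Real.cos (ω * s)) • z
      + (Real.exp (a * s) * Real.sin (ω * s) / ω) • w)
      (M *ᵥ ((Real.exp (a * s) * Real.cos (ω * s)) • z
      + (Real.exp (a * s) * Real.sin (ω * s) / ω) • w)) s := by
    intro s
    have hexp : HasDerivAt (fun s => Real.exp (a * s)) (Real.exp (a * s) * a) s := by
      simpa using ((hasDerivAt_id s).const_mul a).exp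
    have hcos : HasDerivAt (fun s => Real.cos (ω * s)) (-Real.sin (ω * s) * ω) s := by
      simpa using ((hasDerivAt_id s).const_mul ω).cos
    have hsin : HasDerivAt (fun s => Real.sin (ω * s)) (Real.cos (ω * s) * ω) s := by
      simpa using ((hasDerivAt_id s).const_mul ω).sin
    refine (((hexp.mul hcos).smul_const z).add
      (((hexp.mul hsin).div_const ω).smul_const w)).congr_deriv ?_
    rw [mulVec_add, mulVec_smul, mulVec_smul, hz, hw]
    match_scalars
    · field_simp
    · field_simp
      ring
  simpa using exp_smul_mulVec_eq_of_hasDerivAt hsol t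

end Flow

section Orbit

variable {d : ℕ} {M : Matrix (Fin d) (Fin d) ℝ} {z : Fin d → ℝ}

theorem ProjOrbitProperSubsetOfLine.exists_avoided_mem_span
    (h : ProjOrbitProperSubsetOfLine d M z) (hz : z ≠ 0) (hne : ∀ a : ℝ, M *ᵥ z ≠ a • z) :
    M *ᵥ (M *ᵥ z) ∈ Submodule.span ℝ {M *ᵥ z, z} ∧
      ∃ y ∈ Submodule.span ℝ {M *ᵥ z, z}, y ≠ 0 ∧ ∀ t c : ℝ, exp (t • M) *ᵥ z ≠ c • y := by
  obtain ⟨V, hV2, horb, y, hyV, hy0, hyavoid⟩ := h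
  have hV : IsClosed (V : Set (Fin d → ℝ)) := V.closed_of_finiteDimensional
  have horb' : ∀ s : ℝ, exp (s • M) *ᵥ (M *ᵥ z) ∈ V := fun s =>
    (hasDerivAt_exp_smul_mulVec M z s).mem_of_forall_mem hV horb
  have hzV : z ∈ V := by simpa using horb 0
  have hMzV : M *ᵥ z ∈ V := by simpa using horb' 0
  have hM2zV : M *ᵥ (M *ᵥ z) ∈ V := by
    simpa using (hasDerivAt_exp_smul_mulVec M (M *ᵥ z) 0).mem_of_forall_mem hV horb'
  have hindep : LinearIndependent ℝ ![M *ᵥ z, z] :=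
    linearIndependent_fin2.2 ⟨hz, fun a ha => hne a ha.symm⟩
  have hspan : Submodule.span ℝ {M *ᵥ z, z} = V := by
    refine Submodule.eq_of_le_of_finrank_le (Submodule.span_le.2 ?_) ?_
    · rintro u (rfl | rfl)
      exacts [hMzV, hzV]
    · rw [hV2, ← Matrix.range_cons_cons_empty, finrank_span_eq_card hindep, Fintype.card_fin]
  rw [hspan]
  exact ⟨hM2zV, y, hyV, hy0, hyavoid⟩

theorem exists_exp_smul_mulVec_eq_smul_of_discrim_neg {a b : ℝ}
    (hab : M *ᵥ (M *ᵥ z) = a • (M *ᵥ z) + b • z) (hdisc : a ^ 2 + 4 * b < 0)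
    {y : Fin d → ℝ} (hy : y ∈ Submodule.span ℝ {M *ᵥ z, z}) (hy0 : y ≠ 0) :
    ∃ t c : ℝ, exp (t • M) *ᵥ z = c • y := by
  obtain ⟨α, β, rfl⟩ := Submodule.mem_span_pair.mp hy
  set ω := √(-(a ^ 2 + 4 * b)) / 2
  have hω : 0 < ω := by have := Real.sqrt_pos.2 (neg_pos.2 hdisc); positivity
  have hω2 : ω ^ 2 = -(a ^ 2 + 4 * b) / 4 := by
    rw [div_pow, Real.sq_sqrt (by linarith)]
    norm_num
  set w := M *ᵥ z - (a / 2) • z with hw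
  have hMz : M *ᵥ z = (a / 2) • z + w := by module
  have hMw : M *ᵥ w = (-ω ^ 2) • z + (a / 2) • w := by
    rw [hω2, hw, mulVec_sub, mulVec_smul, hab]
    module
  set u : ℂ := ⟨α * (a / 2) + β, ω * α⟩
  have hu : u ≠ 0 := by
    intro hu0
    obtain ⟨hre, him⟩ := Complex.ext_iff.mp hu0
    obtain rfl : α = 0 := by simpa [u, hω.ne'] using him
    obtain rfl : β = 0 := by simpa [u] using hre
    simp at hy0
  refine ⟨u.arg / ω, Real.exp (a / 2 * (u.arg / ω)) / ‖u‖, ?_⟩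
  have harg : ω * (u.arg / ω) = u.arg := by field_simp
  rw [exp_smul_mulVec_of_rotation hω.ne' hMz hMw, harg, Complex.cos_arg hu, Complex.sin_arg, hw]
  match_scalars <;> field_simp <;> ring

theorem exists_eigen_decomposition {l m : ℝ} (hlm : l ≠ m)
    (h : M *ᵥ (M *ᵥ z) = (l + m) • (M *ᵥ z) - (l * m) • z) :
    ∃ p q, z = p + q ∧ M *ᵥ p = l • p ∧ M *ᵥ q = m • q := by
  have hml : m - l ≠ 0 := sub_ne_zero.2 hlm.symm
  refine ⟨(m - l)⁻¹ • (m • z - M *ᵥ z), (m - l)⁻¹ • (M *ᵥ z - l • z), ?_, ?_, ?_⟩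
  · match_scalars <;> field_simp <;> ring
  all_goals
    rw [mulVec_smul, mulVec_sub, mulVec_smul, h]
    module

theorem ProjOrbitProperSubsetOfLine.eigen_or_split_or_jordan
    (h : ProjOrbitProperSubsetOfLine d M z) (hz : z ≠ 0) :
    (∃ l : ℝ, M *ᵥ z = l • z) ∨
      (∃ l m : ℝ, ∃ p q, l < m ∧ z = p + q ∧ M *ᵥ p = l • p ∧ M *ᵥ q = m • q) ∨
      (∃ l : ℝ, ∃ w, w ≠ 0 ∧ M *ᵥ z = l • z + w ∧ M *ᵥ w = l • w) := by
  by_cases heig : ∃ l : ℝ, M *ᵥ z = l • z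
  · exact Or.inl heig
  simp only [not_exists] at heig
  obtain ⟨hM2z, y, hy, hy0, hyavoid⟩ := h.exists_avoided_mem_span hz heig
  obtain ⟨a, b, hab⟩ := Submodule.mem_span_pair.mp hM2z
  rcases lt_trichotomy (a ^ 2 + 4 * b) 0 with hdisc | hdisc | hdisc
  · obtain ⟨t, c, hc⟩ := exists_exp_smul_mulVec_eq_smul_of_discrim_neg hab.symm hdisc hy hy0
    exact absurd hc (hyavoid t c)
  · refine Or.inr (Or.inr ⟨a / 2, M *ᵥ z - (a / 2) • z, sub_ne_zero.2 (heig _), by module, ?_⟩)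
    rw [mulVec_sub, mulVec_smul, ← hab, show b = -(a ^ 2 / 4) by linarith]
    module
  · have hD := Real.sqrt_pos.2 hdisc
    have hD2 := Real.sq_sqrt hdisc.le
    obtain ⟨p, q, hpq, hp, hq⟩ := exists_eigen_decomposition
      (l := (a - √(a ^ 2 + 4 * b)) / 2) (m := (a + √(a ^ 2 + 4 * b)) / 2) (by linarith) (by
        rw [← hab]
        match_scalars <;> linarith)
    exact Or.inr (Or.inl ⟨_, _, p, q, by linarith, hpq, hp, hq⟩)

end Orbit

section Approximation

variable {d : ℕ} {C : Set (Fin d → ℝ)} {Γ : Subgroup (Matrix.GeneralLinearGroup (Fin d) ℝ)}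
  {M : Matrix (Fin d) (Fin d) ℝ}

def ApproachesFlowAtTop (Γ : Subgroup (Matrix.GeneralLinearGroup (Fin d) ℝ))
    (M : Matrix (Fin d) (Fin d) ℝ) : Prop :=
  ∀ ε : ℝ, 0 < ε → ∀ s : ℝ, ∃ γ ∈ Γ, ∃ t : ℝ, t > s ∧ ∃ c : ℝ, c ≠ 0 ∧
    ‖c • ((γ : Matrix (Fin d) (Fin d) ℝ) * (exp (t • M))⁻¹) - 1‖ < ε

theorem ApproachesFlowAtInfinity.atTop (h : ApproachesFlowAtInfinity d Γ M) :
    ApproachesFlowAtTop Γ M :=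
  fun ε hε s => (h ε hε s).1

theorem ApproachesFlowAtInfinity.atTop_neg (h : ApproachesFlowAtInfinity d Γ M) :
    ApproachesFlowAtTop Γ (-M) := by
  intro ε hε s
  obtain ⟨γ, hγ, t, ht, c, hc, hclose⟩ := (h ε hε s).2
  exact ⟨γ, hγ, -t, by linarith, c, hc, by rwa [neg_smul_neg]⟩

/-- `B n` is `c • γ` for group elements `γ` with `c • γ * exp (t n • M)⁻¹ → 1`, along a
subsequence on which the scalars `c` all have the sign `σ`. -/
structure IsFlowApproxSeq (C : Set (Fin d → ℝ)) (M : Matrix (Fin d) (Fin d) ℝ) (σ : ℝ)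
    (B : ℕ → Matrix (Fin d) (Fin d) ℝ) (t : ℕ → ℝ) : Prop where
  sign : σ = 1 ∨ σ = -1
  smul_mulVec_mem : ∀ n, ∀ x ∈ C, σ • (B n *ᵥ x) ∈ C
  tendsto_mul_inv : Tendsto (fun n => B n * (exp (t n • M))⁻¹) atTop (𝓝 1)
  tendsto_time : Tendsto t atTop atTop

theorem ApproachesFlowAtTop.exists_isFlowApproxSeq (h : ApproachesFlowAtTop Γ M)
    (hcone : ∀ x ∈ C, ∀ c : ℝ, 0 < c → c • x ∈ C)
    (hΓ : ∀ γ ∈ Γ, Matrix.mulVec ((γ : Matrix.GeneralLinearGroup (Fin d) ℝ) :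
      Matrix (Fin d) (Fin d) ℝ) '' C = C) :
    ∃ σ B t, IsFlowApproxSeq C M σ B t := by
  choose γ hγ t ht c hc hclose using fun n : ℕ => h (1 / ((n : ℝ) + 1)) Nat.one_div_pos_of_nat n
  have hlim : Tendsto (fun n => c n • ((γ n : Matrix (Fin d) (Fin d) ℝ) * (exp (t n • M))⁻¹))
      atTop (𝓝 1) :=
    tendsto_iff_norm_sub_tendsto_zero.2 (squeeze_zero (fun _ => norm_nonneg _)
      (fun n => (hclose n).le) tendsto_one_div_add_atTop_nhds_zero_nat)
  obtain ⟨σ, hσ, hfreq⟩ : ∃ σ : ℝ, (σ = 1 ∨ σ = -1) ∧ ∃ᶠ n in atTop, 0 < σ * c n := by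
    by_cases hpos : ∃ᶠ n in atTop, 0 < c n
    · exact ⟨1, Or.inl rfl, by simpa using hpos⟩
    · refine ⟨-1, Or.inr rfl, (not_frequently.1 hpos).frequently.mono fun n hn => ?_⟩
      linarith [(not_lt.1 hn).lt_of_ne (hc n)]
  obtain ⟨φ, hφ, hφσ⟩ := extraction_of_frequently_atTop hfreq
  refine ⟨σ, fun n => c (φ n) • (γ (φ n) : Matrix (Fin d) (Fin d) ℝ), t ∘ φ,
    hσ, fun n x hx => ?_, ?_, ?_⟩
  · rw [smul_mulVec, smul_smul]
    exact hcone _ (hΓ _ (hγ _) ▸ mem_image_of_mem _ hx) _ (hφσ n)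
  · simpa only [smul_mul_assoc, Function.comp_def] using hlim.comp hφ.tendsto_atTop
  · exact (tendsto_atTop_mono (fun n => (ht n).le) tendsto_natCast_atTop_atTop).comp
      hφ.tendsto_atTop

namespace IsFlowApproxSeq

variable {σ : ℝ} {B : ℕ → Matrix (Fin d) (Fin d) ℝ} {t : ℕ → ℝ}

theorem smul_mem_closure (h : IsFlowApproxSeq C M σ B t) {x : ℕ → Fin d → ℝ} {u : Fin d → ℝ}
    (hx : ∀ᶠ n in atTop, x n ∈ C) (hu : Tendsto (fun n => exp (t n • M) *ᵥ x n) atTop (𝓝 u)) :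
    σ • u ∈ closure C := by
  have hinv : ∀ n, (exp (t n • M))⁻¹ * exp (t n • M) = 1 := fun n =>
    nonsing_inv_mul _ ((isUnit_iff_isUnit_det _).1 (isUnit_exp _))
  have hBx : Tendsto (fun n => B n *ᵥ x n) atTop (𝓝 u) := by
    simpa [Function.comp_def, mulVec_mulVec, mul_assoc, hinv] using
      ((continuous_fst.matrix_mulVec continuous_snd).tendsto (1, u)).comp
        (h.tendsto_mul_inv.prodMk_nhds hu)
  exact mem_closure_of_tendsto (hBx.const_smul σ) (hx.mono fun n hn => h.smul_mulVec_mem n _ hn)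

theorem mem_closure_of_rescaled_limit (h : IsFlowApproxSeq C M σ B t)
    (hC : IsProperlyConvexOpenCone d C) {z u : Fin d → ℝ} (hz : z ∈ C) (hz0 : z ≠ 0)
    {r : ℕ → ℝ} (hr : ∀ᶠ n in atTop, 0 < r n)
    (hu : Tendsto (fun n => r n • exp (t n • M) *ᵥ z) atTop (𝓝 u))
    (hback : -u ∈ closure C → ∀ s : ℝ, 0 ≤ s → exp ((-s) • M) *ᵥ z ∈ C) :
    u ∈ closure C := by
  obtain ⟨-, -, -, hcone, hsep⟩ := hC
  have hσu : σ • u ∈ closure C :=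
    h.smul_mem_closure (hr.mono fun n hn => hcone z hz _ hn) (by simpa [mulVec_smul] using hu)
  rcases h.sign with rfl | rfl
  · simpa using hσu
  · have hzneg : (-1 : ℝ) • z ∈ closure C := by
      refine h.smul_mem_closure ((h.tendsto_time.eventually_ge_atTop 0).mono
        fun n hn => hback (by simpa using hσu) _ hn) ?_
      simpa only [exp_smul_mulVec_exp_neg_smul_mulVec] using tendsto_const_nhds
    exact absurd (hsep.subset ⟨subset_closure hz, by simpa using hzneg⟩) hz0

theorem mem_closure_of_eigen_split (h : IsFlowApproxSeq C M σ B t)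
    (hC : IsProperlyConvexOpenCone d C) {l m : ℝ} (hlm : l < m) {p q : Fin d → ℝ}
    (hz : p + q ∈ C) (hz0 : p + q ≠ 0) (hp : M *ᵥ p = l • p) (hq : M *ᵥ q = m • q) :
    q ∈ closure C := by
  have hflow : ∀ s : ℝ, exp (s • M) *ᵥ (p + q) = Real.exp (l * s) • p + Real.exp (m * s) • q :=
    fun s => by rw [mulVec_add, exp_smul_mulVec_of_eigen hp, exp_smul_mulVec_of_eigen hq]
  refine h.mem_closure_of_rescaled_limit hC hz hz0 (r := fun n => Real.exp (-(m * t n)))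
    (Eventually.of_forall fun n => Real.exp_pos _) ?_ fun hq' s hs => ?_
  · have hdecay : Tendsto (fun n => Real.exp ((l - m) * t n)) atTop (𝓝 0) :=
      Real.tendsto_exp_atBot.comp
        ((tendsto_const_mul_atBot_of_neg (sub_neg.2 hlm)).2 h.tendsto_time)
    convert (hdecay.smul_const p).add_const q using 2 with n
    · rw [hflow, smul_add, smul_smul, smul_smul, ← Real.exp_add, ← Real.exp_add,
        neg_add_cancel, Real.exp_zero, one_smul]
      ring_nf
    · simp
  · obtain ⟨-, hopen, hconv, hcone, -⟩ := hC
    have hcomb : Real.exp (l * -s) • p + Real.exp (m * -s) • q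
        = Real.exp (l * -s) • (p + q) + (Real.exp (l * -s) - Real.exp (m * -s)) • -q := by
      module
    rw [hflow, hcomb]
    exact smul_add_smul_mem_of_mem_closure hopen hconv hcone (Real.exp_pos _)
      (sub_nonneg.2 (Real.exp_le_exp.2 (by nlinarith))) hz hq'

theorem mem_closure_of_jordan (h : IsFlowApproxSeq C M σ B t)
    (hC : IsProperlyConvexOpenCone d C) {l : ℝ} {z w : Fin d → ℝ} (hz : z ∈ C) (hz0 : z ≠ 0)
    (hMz : M *ᵥ z = l • z + w) (hMw : M *ᵥ w = l • w) :
    w ∈ closure C := by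
  refine h.mem_closure_of_rescaled_limit hC hz hz0 (r := fun n => Real.exp (-(l * t n)) / t n)
    ((h.tendsto_time.eventually_gt_atTop 0).mono fun n hn => by positivity) ?_ fun hw' s hs => ?_
  · have hlim := ((tendsto_inv_atTop_zero.comp h.tendsto_time).smul_const z).add_const w
    rw [zero_smul, zero_add] at hlim
    refine hlim.congr' ((h.tendsto_time.eventually_gt_atTop 0).mono fun n hn => ?_)
    dsimp only [Function.comp_apply]
    rw [exp_smul_mulVec_of_jordan hMz hMw, smul_add, smul_smul, smul_smul, Real.exp_neg]
    match_scalars <;> field_simp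
  · obtain ⟨-, hopen, hconv, hcone, -⟩ := hC
    have hcomb : Real.exp (l * -s) • z + (-s * Real.exp (l * -s)) • w
        = Real.exp (l * -s) • z + (s * Real.exp (l * -s)) • -w := by
      module
    rw [exp_smul_mulVec_of_jordan hMz hMw, hcomb]
    exact smul_add_smul_mem_of_mem_closure hopen hconv hcone (Real.exp_pos _)
      (by positivity) hz hw'

end IsFlowApproxSeq

end Approximation

theorem mapsTo_exp_smul_mulVec {d : ℕ} {C : Set (Fin d → ℝ)} {M : Matrix (Fin d) (Fin d) ℝ}
    {σ σ' : ℝ} {B B' : ℕ → Matrix (Fin d) (Fin d) ℝ} {t t' : ℕ → ℝ}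
    (hC : IsProperlyConvexOpenCone d C)
    (hlin : ∀ x : Fin d → ℝ, x ≠ 0 → ProjOrbitProperSubsetOfLine d M x)
    (hP : IsFlowApproxSeq C M σ B t) (hN : IsFlowApproxSeq C (-M) σ' B' t') (τ : ℝ) :
    MapsTo (exp (τ • M)).mulVec C C := by
  intro z hz
  have ⟨_, hopen, hconv, hcone, hsep⟩ := hC
  by_cases hz0 : z = 0
  · simpa [hz0] using hz
  rcases (hlin z hz0).eigen_or_split_or_jordan hz0 with
    ⟨l, hl⟩ | ⟨l, m, p, q, hlm, rfl, hp, hq⟩ | ⟨l, w, hw0, hMz, hMw⟩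
  · rw [exp_smul_mulVec_of_eigen hl]
    exact hcone z hz _ (Real.exp_pos _)
  · have hq' := hP.mem_closure_of_eigen_split hC hlm hz hz0 hp hq
    have hp' := hN.mem_closure_of_eigen_split hC (neg_lt_neg hlm) (add_comm p q ▸ hz)
      (add_comm p q ▸ hz0) (by simp [neg_mulVec, hq]) (by simp [neg_mulVec, hp])
    rw [mulVec_add, exp_smul_mulVec_of_eigen hp, exp_smul_mulVec_of_eigen hq]
    exact smul_add_smul_mem_of_add_mem hopen hconv hcone (Real.exp_pos _) (Real.exp_pos _)
      hz hp' hq'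
  · have hw := hP.mem_closure_of_jordan hC hz hz0 hMz hMw
    have hnegw := hN.mem_closure_of_jordan hC hz hz0 (l := -l) (w := -w)
      (by rw [neg_mulVec, hMz]; module) (by rw [neg_mulVec, mulVec_neg, hMw]; module)
    exact absurd (hsep.subset ⟨hw, by simpa using hnegw⟩) hw0

/-- If `Γ` preserves a properly convex open cone `C` and approaches a linear flow at
infinity, then the flow preserves `C`. -/
theorem flow_preserves_of_approaches (d : ℕ)
    (C : Set (Fin d → ℝ)) (hC : IsProperlyConvexOpenCone d C)
    (Γ : Subgroup (Matrix.GeneralLinearGroup (Fin d) ℝ))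
    (hΓ : ∀ γ ∈ Γ, Matrix.mulVec ((γ : Matrix.GeneralLinearGroup (Fin d) ℝ) :
      Matrix (Fin d) (Fin d) ℝ) '' C = C)
    (M : Matrix (Fin d) (Fin d) ℝ)
    (hlin : ∀ x : Fin d → ℝ, x ≠ 0 → ProjOrbitProperSubsetOfLine d M x)
    (happ : ApproachesFlowAtInfinity d Γ M) :
    ∀ t : ℝ, Matrix.mulVec (NormedSpace.exp (t • M)) '' C = C := by
  obtain ⟨σ, B, tP, hP⟩ := happ.atTop.exists_isFlowApproxSeq hC.2.2.2.1 hΓ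
  obtain ⟨σ', B', tN, hN⟩ := happ.atTop_neg.exists_isFlowApproxSeq hC.2.2.2.1 hΓ
  have hmaps := mapsTo_exp_smul_mulVec hC hlin hP hN
  intro τ
  exact SurjOn.image_eq_of_mapsTo (fun u hu =>
    ⟨_, hmaps (-τ) hu, exp_smul_mulVec_exp_neg_smul_mulVec M τ u⟩) (hmaps τ)
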